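/- (Change of variables over the neighborhood of the moment surface.) Define Ψ : ℝ³ → ℝ³ by Ψ(t, s, v) = (t + s, t² + 2ts, t³ + 3t²s + v), and for δ > 0 let N_δ = Ψ(ℝ × [0,2] × [-δ, δ]). Then for every integrable function g : ℝ³ → ℂ, ∫_{N_δ} g(ξ) dξ = ∫_{-δ}^{δ} ∫_0^2 ∫_ℝ g(Ψ(t,s,v)) · 2s dt ds dv. -/

import Mathlib

/-!
`Ψ` is a polynomial map whose Jacobian determinant is `-2s`, and it is injective on `{s ≥ 0}`:
since `t + s` and `t² + 2ts = (t + s)² - s²` are known, so is `s²`, hence `s`, `t` and finally `v`.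
The change of variables formula for injective differentiable maps turns `∫_{N_δ} g` into the
integral of `2s · g ∘ Ψ` over the box `ℝ × [0,2] × [-δ,δ]`, and Fubini splits it into iterated
integrals.
-/

open MeasureTheory Set

noncomputable section

abbrev R3 : Type := ℝ × ℝ × ℝ

def Ψmap (q : R3) : R3 :=
  (q.1 + q.2.1, q.1 ^ 2 + 2 * q.1 * q.2.1, q.1 ^ 3 + 3 * q.1 ^ 2 * q.2.1 + q.2.2)

def LinearEquiv.prodProdFinThree (R : Type*) [CommSemiring R] :
    (R × R × R) ≃ₗ[R] (Fin 3 → R) where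
  toFun q := ![q.1, q.2.1, q.2.2]
  invFun x := (x 0, x 1, x 2)
  map_add' a b := by funext i; fin_cases i <;> simp
  map_smul' c a := by funext i; fin_cases i <;> simp
  left_inv a := by simp
  right_inv x := by funext i; fin_cases i <;> simp

def jacobianΨ (t s : ℝ) : Matrix (Fin 3) (Fin 3) ℝ :=
  !![1, 1, 0; 2 * t + 2 * s, 2 * t, 0; 3 * t ^ 2 + 6 * t * s, 3 * t ^ 2, 1]

def fderivΨ (q : R3) : R3 →L[ℝ] R3 :=
  let e := LinearEquiv.prodProdFinThree ℝ
  LinearMap.toContinuousLinearMap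
    (e.symm.toLinearMap ∘ₗ (jacobianΨ q.1 q.2.1).toLin' ∘ₗ e.toLinearMap)

lemma fderivΨ_apply (q u : R3) :
    fderivΨ q u = (u.1 + u.2.1,
      (2 * q.1 + 2 * q.2.1) * u.1 + 2 * q.1 * u.2.1,
      (3 * q.1 ^ 2 + 6 * q.1 * q.2.1) * u.1 + 3 * q.1 ^ 2 * u.2.1 + u.2.2) := by
  ext <;> simp [fderivΨ, jacobianΨ, LinearEquiv.prodProdFinThree, Matrix.toLin'_apply,
    Matrix.mulVec, dotProduct, Fin.sum_univ_three]

lemma det_fderivΨ (q : R3) : (fderivΨ q).det = -2 * q.2.1 := by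
  have hconj := LinearMap.det_conj (jacobianΨ q.1 q.2.1).toLin'
    (LinearEquiv.prodProdFinThree ℝ).symm
  rw [LinearEquiv.symm_symm] at hconj
  rw [fderivΨ, ContinuousLinearMap.det, LinearMap.coe_toContinuousLinearMap, hconj,
    LinearMap.det_toLin', jacobianΨ, Matrix.det_fin_three]
  simp

lemma hasFDerivAt_Ψmap (q : R3) : HasFDerivAt Ψmap (fderivΨ q) q := by
  have ht : HasFDerivAt (fun p : R3 => p.1) (.fst ℝ ℝ (ℝ × ℝ)) q := hasFDerivAt_fst
  have hs : HasFDerivAt (fun p : R3 => p.2.1) _ q := (hasFDerivAt_snd (𝕜 := ℝ) (p := q)).fst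
  have hv : HasFDerivAt (fun p : R3 => p.2.2) _ q := (hasFDerivAt_snd (𝕜 := ℝ) (p := q)).snd
  refine ((ht.add hs).prodMk (((ht.pow 2).add ((ht.const_mul 2).mul hs)).prodMk
    (((ht.pow 3).add (((ht.pow 2).const_mul 3).mul hs)).add hv))).congr_fderiv ?_
  ext <;> simp [fderivΨ_apply] <;> ring

lemma injOn_Ψmap : InjOn Ψmap {q : R3 | 0 ≤ q.2.1} := by
  rintro ⟨t, s, v⟩ (hs : 0 ≤ s) ⟨t', s', v'⟩ (hs' : 0 ≤ s') h
  simp only [Ψmap, Prod.mk.injEq] at h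
  obtain ⟨h1, h2, h3⟩ := h
  have hsq : s ^ 2 = s' ^ 2 := by
    have h1sq : (t + s) ^ 2 = (t' + s') ^ 2 := by rw [h1]
    nlinarith
  obtain rfl : s = s' := by nlinarith [sq_nonneg (s - s'), sq_nonneg (s + s')]
  obtain rfl : t = t' := by linarith
  simp_all

theorem setIntegral_univ_prod_prod {α β γ E : Type*} [MeasurableSpace α] [MeasurableSpace β]
    [MeasurableSpace γ] [NormedAddCommGroup E] [NormedSpace ℝ E] {μ : Measure α}
    {ν : Measure β} {ρ : Measure γ} [SFinite μ] [SFinite ν] [SFinite ρ] {A : Set β}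
    {B : Set γ} {F : α × β × γ → E} (hF : IntegrableOn F (univ ×ˢ A ×ˢ B) (μ.prod (ν.prod ρ))) :
    ∫ x in univ ×ˢ A ×ˢ B, F x ∂(μ.prod (ν.prod ρ)) =
      ∫ c in B, ∫ b in A, ∫ a, F (a, b, c) ∂μ ∂ν ∂ρ := by
  rw [IntegrableOn, ← Measure.prod_restrict, ← Measure.prod_restrict, Measure.restrict_univ] at hF
  rw [← Measure.prod_restrict, ← Measure.prod_restrict, Measure.restrict_univ,
    integral_prod_symm F hF, integral_prod_symm _ hF.integral_prod_right]

-- Instance search does not see that `volume` on `R3` is a product of Haar measures.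
instance : (volume : Measure R3).IsAddHaarMeasure :=
  Measure.prod.instIsAddHaarMeasure _ _

theorem change_of_variables_moment_neighborhood_general (δ : ℝ) (g : R3 → ℂ)
    (hg : Integrable g volume) :
    ∫ ξ in Ψmap '' (univ ×ˢ Icc (0:ℝ) 2 ×ˢ Icc (-δ) δ), g ξ =
      ∫ v in Icc (-δ) δ, ∫ s in Icc (0:ℝ) 2, ∫ t : ℝ, (2 * s) • g (Ψmap (t, s, v)) := by
  set S : Set R3 := univ ×ˢ Icc (0:ℝ) 2 ×ˢ Icc (-δ) δ
  have hS : MeasurableSet S := MeasurableSet.univ.prod (measurableSet_Icc.prod measurableSet_Icc)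
  have hderiv x (_ : x ∈ S) : HasFDerivWithinAt Ψmap (fderivΨ x) S x :=
    (hasFDerivAt_Ψmap x).hasFDerivWithinAt
  have hinj : InjOn Ψmap S := injOn_Ψmap.mono fun q hq => hq.2.1.1
  have habs : EqOn (fun x => |(fderivΨ x).det| • g (Ψmap x))
      (fun x => (2 * x.2.1) • g (Ψmap x)) S := by
    rintro ⟨t, s, v⟩ ⟨-, ⟨hs, -⟩, -⟩
    dsimp only at hs ⊢
    rw [det_fderivΨ, abs_of_nonpos (by linarith), neg_mul, neg_neg]
  have hint := (integrableOn_image_iff_integrableOn_abs_det_fderiv_smul volume hS hderiv hinj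
    g).1 hg.integrableOn
  rw [integral_image_eq_integral_abs_det_fderiv_smul volume hS hderiv hinj,
    setIntegral_congr_fun hS habs]
  exact setIntegral_univ_prod_prod (hint.congr_fun habs hS)

/-- **Change of variables over the neighborhood of the moment surface**: for
`N_δ = Ψ(ℝ × [0,2] × [-δ,δ])` and integrable `g : ℝ³ → ℂ`,
`∫_{N_δ} g = ∫_{-δ}^δ ∫_0^2 ∫_ℝ g(Ψ(t,s,v)) · 2s dt ds dv`. -/
theorem change_of_variables_moment_neighborhood (δ : ℝ) (hδ : 0 < δ) (g : R3 → ℂ)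
    (hg : Integrable g volume) :
    ∫ ξ in Ψmap '' (univ ×ˢ Icc (0:ℝ) 2 ×ˢ Icc (-δ) δ), g ξ =
      ∫ v in Icc (-δ) δ, ∫ s in Icc (0:ℝ) 2, ∫ t : ℝ, (2 * s) • g (Ψmap (t, s, v)) :=
  change_of_variables_moment_neighborhood_general δ g hg
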